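/- arXiv:1810.12734 — 5 statements merged into one kernel-verified Lean document; each statement's English description precedes it below -/
import Mathlib

section
/- For t ≥ 5 and n ≥ t, there is no Berge-S_t saturated hypergraph on n vertices with exactly t - 2 hyperedges; i.e., sat(n, B(S_t)) ≥ t - 1. -/
/-!
If `H` is Berge-`S_t` saturated with at most `t - 2` hyperedges, adding a new hyperedge `e`
leaves at most `t - 1` hyperedges, so a Berge star must use all of them, `H` has exactly `t - 2`
hyperedges, and its centre lies in `e` and in every hyperedge of `H`. Hence every non-hyperedge of
size at least 2 meets the common intersection `S` of the hyperedges of `H`. If `S` is empty, any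
new pair contradicts this. Otherwise all `t - 2 ≥ 3` hyperedges contain `S`, so at least two
vertices `x, y` lie outside `S`, and the pair `{x, y}` (not a hyperedge, as it misses `S`)
contradicts it.
-/

open Finset

/-- A hypergraph `H` on `[n]` contains a Berge-`S_t` subhypergraph (`S_t` is the star on `t`
vertices): there are `t - 1` distinct hyperedges `E k` of `H` and distinct vertices
`c, v 1, …, v (t-1)` with `{c, v k} ⊆ E k` for every `k`. -/
def HasBergeStar (t n : ℕ) (H : Finset (Finset (Fin n))) : Prop :=
  ∃ (E : Fin (t - 1) → Finset (Fin n)) (c : Fin n) (v : Fin (t - 1) → Fin n),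
    Function.Injective E ∧ Function.Injective v ∧ (∀ k, v k ≠ c) ∧
      ∀ k, E k ∈ H ∧ c ∈ E k ∧ v k ∈ E k

def StarSat (t n : ℕ) (H : Finset (Finset (Fin n))) : Prop :=
  (∀ e ∈ H, 2 ≤ e.card) ∧ ¬ HasBergeStar t n H ∧
    ∀ e : Finset (Fin n), e ∉ H → 2 ≤ e.card → HasBergeStar t n (insert e H)

/-- The hypergraph `H_t(n)` on `[n]` with hyperedges `[n]`, `[n] \ {i}` for `i ∈ [t-3]`,
and `[t-3]`. -/
def Ht (t n : ℕ) : Finset (Finset (Fin n)) :=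
  insert (Finset.univ.filter (fun i : Fin n => (i : ℕ) < t - 3))
    (insert Finset.univ
      ((Finset.univ.filter (fun i : Fin n => (i : ℕ) < t - 3)).image
        (fun i => Finset.univ.erase i)))

lemma Nat.sub_two_lt_choose_two {n : ℕ} (hn : 2 ≤ n) : n - 2 < n.choose 2 := by
  obtain ⟨m, rfl⟩ := Nat.exists_eq_add_of_le' hn
  rw [Nat.choose_succ_succ, Nat.choose_one_right]
  omega

lemma Finset.exists_card_eq_two_notMem {α : Type*} [Fintype α] {H : Finset (Finset α)}
    (hH : #H < (Fintype.card α).choose 2) : ∃ e : Finset α, #e = 2 ∧ e ∉ H := by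
  rw [← card_univ, ← card_powersetCard] at hH
  obtain ⟨e, he, heH⟩ := exists_mem_notMem_of_card_lt_card hH
  exact ⟨e, (mem_powersetCard.mp he).2, heH⟩

lemma Finset.card_le_two_pow_card_compl_of_forall_subset {α : Type*} [Fintype α] [DecidableEq α]
    {H : Finset (Finset α)} {S : Finset α} (hS : ∀ A ∈ H, S ⊆ A) : #H ≤ 2 ^ #Sᶜ := by
  calc #H = #(H.image compl) := (card_image_of_injective _ compl_injective).symm
    _ ≤ #Sᶜ.powerset := card_le_card fun B hB => by
        obtain ⟨A, hA, rfl⟩ := mem_image.mp hB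
        exact mem_powerset.mpr (compl_subset_compl.mpr (hS A hA))
    _ = 2 ^ #Sᶜ := card_powerset _

namespace HasBergeStar

variable {t n : ℕ} {G : Finset (Finset (Fin n))}

lemma exists_subset_card_eq (h : HasBergeStar t n G) :
    ∃ F ⊆ G, #F = t - 1 ∧ ∃ c, ∀ A ∈ F, c ∈ A := by
  obtain ⟨E, c, v, hE, -, -, hk⟩ := h
  refine ⟨univ.image E, fun A hA => ?_, ?_, c, fun A hA => ?_⟩
  · obtain ⟨k, -, rfl⟩ := mem_image.mp hA
    exact (hk k).1
  · rw [card_image_of_injective _ hE, card_univ, Fintype.card_fin]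
  · obtain ⟨k, -, rfl⟩ := mem_image.mp hA
    exact (hk k).2.1

lemma sub_one_le_card (h : HasBergeStar t n G) : t - 1 ≤ #G := by
  obtain ⟨F, hFG, hF, -⟩ := h.exists_subset_card_eq
  exact hF ▸ card_le_card hFG

lemma exists_forall_mem_of_card_le (h : HasBergeStar t n G) (hG : #G ≤ t - 1) :
    ∃ c, ∀ A ∈ G, c ∈ A := by
  obtain ⟨F, hFG, hF, hc⟩ := h.exists_subset_card_eq
  exact eq_of_subset_of_card_le hFG (hF ▸ hG) ▸ hc

end HasBergeStar

namespace StarSat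

variable {t n : ℕ} {H : Finset (Finset (Fin n))}

lemma sub_one_le_card_add_one (hs : StarSat t n H) {e : Finset (Fin n)} (he : e ∉ H)
    (he2 : 2 ≤ #e) : t - 1 ≤ #H + 1 :=
  card_insert_of_notMem he ▸ (hs.2.2 e he he2).sub_one_le_card

lemma sub_two_le_card (hs : StarSat t n H) (hH : #H < n.choose 2) : t - 2 ≤ #H := by
  obtain ⟨e, he2, he⟩ := exists_card_eq_two_notMem (by rwa [Fintype.card_fin])
  have := hs.sub_one_le_card_add_one he he2.ge
  omega

lemma exists_mem_forall_mem (hs : StarSat t n H) (hH : #H + 2 ≤ t) {e : Finset (Fin n)}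
    (he : e ∉ H) (he2 : 2 ≤ #e) : ∃ c ∈ e, ∀ A ∈ H, c ∈ A := by
  have hcard : #(insert e H) ≤ t - 1 := by
    rw [card_insert_of_notMem he]
    omega
  obtain ⟨c, hc⟩ := (hs.2.2 e he he2).exists_forall_mem_of_card_le hcard
  exact ⟨c, hc e (mem_insert_self e H), fun A hA => hc A (mem_insert_of_mem hA)⟩

lemma card_ne_sub_two (hs : StarSat t n H) (ht : 5 ≤ t) (hH : #H < n.choose 2) :
    #H ≠ t - 2 := by
  intro hcard
  have hmeet : ∀ e, e ∉ H → 2 ≤ #e → ∃ c ∈ e, ∀ A ∈ H, c ∈ A :=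
    fun _ => hs.exists_mem_forall_mem (by omega)
  by_cases hS : ∃ s, ∀ A ∈ H, s ∈ A
  · obtain ⟨s, hsH⟩ := hS
    set S := univ.filter fun x => ∀ A ∈ H, x ∈ A
    have hsS : s ∈ S := mem_filter.mpr ⟨mem_univ s, hsH⟩
    have hSA : ∀ A ∈ H, S ⊆ A := fun A hA x hx => (mem_filter.mp hx).2 A hA
    have hSc : 1 < #Sᶜ := by
      have := card_le_two_pow_card_compl_of_forall_subset hSA
      exact (Nat.pow_lt_pow_iff_right (by norm_num)).mp (by omega : 2 ^ 1 < 2 ^ #Sᶜ)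
    obtain ⟨x, hx, y, hy, hxy⟩ := one_lt_card.mp hSc
    have hxyS : ∀ z ∈ ({x, y} : Finset (Fin n)), z ∉ S := by
      simp only [mem_insert, mem_singleton]
      rintro z (rfl | rfl) <;> exact mem_compl.mp ‹_›
    have hxyH : {x, y} ∉ H := fun hmem => hxyS s (hSA _ hmem hsS) hsS
    obtain ⟨c, hc, hcH⟩ := hmeet _ hxyH (card_pair hxy).ge
    exact hxyS c hc (mem_filter.mpr ⟨mem_univ c, hcH⟩)
  · obtain ⟨e, he2, he⟩ := exists_card_eq_two_notMem (by rwa [Fintype.card_fin])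
    obtain ⟨c, -, hc⟩ := hmeet _ he he2.ge
    exact hS ⟨c, hc⟩

end StarSat

/-- For `t ≥ 5` and `n ≥ t`, there is no Berge-`S_t` saturated hypergraph on `n` vertices with
exactly `t - 2` hyperedges; i.e. `sat(n, B(S_t)) ≥ t - 1`. -/
theorem no_starSat_card_sub_two (t n : ℕ) (ht : 5 ≤ t) (hn : t ≤ n) :
    (¬ ∃ H : Finset (Finset (Fin n)), StarSat t n H ∧ H.card = t - 2) ∧
    (∀ H : Finset (Finset (Fin n)), StarSat t n H → t - 1 ≤ H.card) := by
  have hchoose : t - 2 < n.choose 2 :=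
    (Nat.sub_le_sub_right hn 2).trans_lt (Nat.sub_two_lt_choose_two (by omega))
  have key (H : Finset (Finset (Fin n))) (hs : StarSat t n H) : t - 1 ≤ H.card := by
    by_contra! hlt
    have hH : #H < n.choose 2 := by omega
    have := hs.sub_two_le_card hH
    exact hs.card_ne_sub_two ht hH (by omega)
  exact ⟨fun ⟨H, hs, hcard⟩ => by have := key H hs; omega, key⟩
end

section
/- For t ≥ 5 and n ≥ t, the hypergraph H_t(n) on vertex set [n] with hyperedge set {[n], [n]\{1}, [n]\{2}, ..., [n]\{t-3}, [t-3]} is Berge-S_t saturated; in particular sat(n, B(S_t)) ≤ t - 1. -/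
open Finset

/-!
For every vertex `c` exactly one hyperedge of `H_t(n)` misses `c`: `[n] \ {c}` if `c ∈ [t-3]`, and
`[t-3]` otherwise. So only `t - 2` hyperedges contain any given vertex, too few for the centre of
a Berge-`S_t`. If a new edge `e` is added, take `c = max e`: `e` and the `t - 2` old hyperedges
through `c` are `t - 1` edges through `c`, and Hall's theorem gives them distinct leaves. All of
them except `e` and `[t-3]` have at least `n - 1` vertices; and if `c ∈ [t-3]`, the maximality
of `c` forces `e ⊊ [t-3]`, so `[t-3]` has at least three vertices.
-/

section BergeStar

variable {t n : ℕ} {H : Finset (Finset (Fin n))}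

theorem HasBergeStar.exists_le_card_filter_mem (h : HasBergeStar t n H) :
    ∃ c, t - 1 ≤ #(H.filter (c ∈ ·)) := by
  obtain ⟨E, c, _, hE, _, _, hEH⟩ := h
  refine ⟨c, ?_⟩
  calc t - 1 = #(univ.image E) := by rw [card_image_of_injective _ hE, card_univ, Fintype.card_fin]
    _ ≤ #(H.filter (c ∈ ·)) := card_le_card fun X hX => by
      obtain ⟨k, -, rfl⟩ := mem_image.1 hX
      exact mem_filter.2 ⟨(hEH k).1, (hEH k).2.1⟩

theorem hasBergeStar_of_hall {F : Finset (Finset (Fin n))} {c : Fin n} (hFH : F ⊆ H)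
    (hF : #F = t - 1) (hc : ∀ X ∈ F, c ∈ X)
    (hall : ∀ G ⊆ F, #G ≤ #(G.biUnion (·.erase c))) : HasBergeStar t n H := by
  obtain ⟨v, hv, hvF⟩ := (all_card_le_biUnion_card_iff_exists_injective
    fun X : F => X.1.erase c).1 fun s => by
      have := hall (s.image (↑)) fun X hX => by
        obtain ⟨X, -, rfl⟩ := mem_image.1 hX
        exact X.2
      rwa [image_biUnion, card_image_of_injective _ Subtype.val_injective] at this
  let σ : F ≃ Fin (t - 1) := Fintype.equivFinOfCardEq (by simpa using hF)
  refine ⟨fun k => (σ.symm k).1, c, fun k => v (σ.symm k),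
    Subtype.val_injective.comp σ.symm.injective, hv.comp σ.symm.injective,
    fun k => (mem_erase.1 (hvF _)).1,
    fun k => ⟨hFH (σ.symm k).2, hc _ (σ.symm k).2, (mem_erase.1 (hvF _)).2⟩⟩

end BergeStar

section Ht

variable {t n : ℕ}

def smallEdge (t n : ℕ) : Finset (Fin n) := univ.filter fun i : Fin n => (i : ℕ) < t - 3

@[simp]
theorem mem_smallEdge {i : Fin n} : i ∈ smallEdge t n ↔ (i : ℕ) < t - 3 := by
  simp [smallEdge]

theorem card_smallEdge (h : t - 3 ≤ n) : #(smallEdge t n) = t - 3 := by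
  simp [smallEdge, Fin.card_filter_val_lt, h]

theorem Ht_eq : Ht t n = insert (smallEdge t n) (insert univ ((smallEdge t n).image univ.erase)) :=
  rfl

theorem mem_Ht {X : Finset (Fin n)} :
    X ∈ Ht t n ↔ X = smallEdge t n ∨ X = univ ∨ ∃ i ∈ smallEdge t n, X = univ.erase i := by
  simp only [Ht_eq, mem_insert, mem_image, eq_comm (a := X)]

theorem smallEdge_ne_univ (hn : t - 3 < n) : smallEdge t n ≠ univ := fun h => by
  have : (⟨n - 1, by omega⟩ : Fin n) ∈ smallEdge t n := h ▸ mem_univ _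
  simp only [mem_smallEdge] at this
  omega

theorem smallEdge_ne_univ_erase {i : Fin n} (hi : i ∈ smallEdge t n) :
    smallEdge t n ≠ univ.erase i := fun h => by
  have : i ∈ univ.erase i := h ▸ hi
  simp at this

theorem card_Ht (ht : 3 ≤ t) (hn : t - 3 < n) : #(Ht t n) = t - 1 := by
  rw [Ht_eq, card_insert_of_notMem, card_insert_of_notMem,
    card_image_of_injective _ fun i j h => (erase_inj _ (mem_univ i)).1 h, card_smallEdge hn.le]
  · omega
  · simpa [eq_comm] using fun i _ => erase_ne_self.2 (mem_univ (α := Fin n) i)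
  · simpa using ⟨smallEdge_ne_univ hn,
      fun i hi => (smallEdge_ne_univ_erase (mem_smallEdge.2 hi)).symm⟩

theorem filter_not_mem_Ht (c : Fin n) :
    (Ht t n).filter (c ∉ ·) = {if c ∈ smallEdge t n then univ.erase c else smallEdge t n} := by
  ext X
  simp only [mem_filter, mem_Ht, mem_singleton]
  split_ifs with hc
  · constructor
    · rintro ⟨rfl | rfl | ⟨i, -, rfl⟩, hcX⟩
      · exact absurd hc hcX
      · exact absurd (mem_univ c) hcX
      · obtain rfl : c = i := by simpa using hcX
        rfl
    · rintro rfl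
      exact ⟨Or.inr (Or.inr ⟨c, hc, rfl⟩), by simp⟩
  · constructor
    · rintro ⟨rfl | rfl | ⟨i, hi, rfl⟩, hcX⟩
      · rfl
      · exact absurd (mem_univ c) hcX
      · exact absurd (mem_erase.2 ⟨fun h : c = i => hc (h ▸ hi), mem_univ c⟩) hcX
    · rintro rfl
      exact ⟨Or.inl rfl, hc⟩

theorem card_filter_mem_Ht (ht : 3 ≤ t) (hn : t - 3 < n) (c : Fin n) :
    #((Ht t n).filter (c ∈ ·)) = t - 2 := by
  have := card_filter_add_card_filter_not (s := Ht t n) (c ∈ ·)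
  rw [filter_not_mem_Ht, card_singleton, card_Ht ht hn] at this
  omega

theorem not_hasBergeStar_Ht (ht : 3 ≤ t) (hn : t - 3 < n) : ¬ HasBergeStar t n (Ht t n) := by
  intro h
  obtain ⟨c, hc⟩ := h.exists_le_card_filter_mem
  rw [card_filter_mem_Ht ht hn] at hc
  omega

theorem two_le_card_of_mem_Ht (ht : 5 ≤ t) (hn : t ≤ n) {X : Finset (Fin n)} (hX : X ∈ Ht t n) :
    2 ≤ #X := by
  rcases mem_Ht.1 hX with rfl | rfl | ⟨i, -, rfl⟩
  · rw [card_smallEdge (by omega)]; omega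
  · rw [card_univ, Fintype.card_fin]; omega
  · rw [card_erase_of_mem (mem_univ i), card_univ, Fintype.card_fin]; omega

theorem ssubset_smallEdge_of_max'_mem {e : Finset (Fin n)} (he : e ∉ Ht t n) (hne : e.Nonempty)
    (hmax : e.max' hne ∈ smallEdge t n) : e ⊂ smallEdge t n :=
  ssubset_of_subset_of_ne
    (fun x hx => mem_smallEdge.2 ((Fin.le_def.1 (e.le_max' x hx)).trans_lt (mem_smallEdge.1 hmax)))
    fun h => he (h ▸ mem_Ht.2 (Or.inl rfl))

theorem card_filter_mem_insert_Ht (ht : 3 ≤ t) (hn : t - 3 < n) {e : Finset (Fin n)}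
    (he : e ∉ Ht t n) {c : Fin n} (hc : c ∈ e) : #((insert e (Ht t n)).filter (c ∈ ·)) = t - 1 := by
  rw [filter_insert, if_pos hc, card_insert_of_notMem fun h => he (mem_filter.1 h).1,
    card_filter_mem_Ht ht hn]
  omega

theorem exists_card_lt_of_subset_filter_insert_Ht (ht : 3 ≤ t) (hn : t ≤ n)
    {e : Finset (Fin n)} (he : e ∉ Ht t n) (he2 : 2 ≤ #e) (hne : e.Nonempty)
    {G : Finset (Finset (Fin n))} (hG : G ⊆ (insert e (Ht t n)).filter (e.max' hne ∈ ·)) :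
    G = ∅ ∨ ∃ X ∈ G, #G < #X := by
  set F := (insert e (Ht t n)).filter (e.max' hne ∈ ·)
  have hF : #F = t - 1 := card_filter_mem_insert_Ht (by omega) (by omega) he (e.max'_mem hne)
  have hG_le : #G ≤ t - 1 := hF ▸ card_le_card hG
  by_cases hU : univ ∈ G
  · exact .inr ⟨univ, hU, by rw [card_univ, Fintype.card_fin]; omega⟩
  have hG_le' : #G ≤ t - 2 := by
    have hUF : univ ∈ F := mem_filter.2 ⟨mem_insert_of_mem (mem_Ht.2 (.inr (.inl rfl))), mem_univ _⟩
    have := card_le_card fun X hX => mem_erase.2 ⟨fun h : X = univ => hU (h ▸ hX), hG hX⟩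
    rw [card_erase_of_mem hUF, hF] at this
    omega
  by_cases hE : ∃ i, univ.erase i ∈ G
  · obtain ⟨i, hi⟩ := hE
    exact .inr ⟨_, hi, by rw [card_erase_of_mem (mem_univ i), card_univ, Fintype.card_fin]; omega⟩
  rw [not_exists] at hE
  have hGsub : G ⊆ {smallEdge t n, e} := fun X hX => by
    rcases mem_insert.1 (mem_filter.1 (hG hX)).1 with rfl | hXH
    · simp
    rcases mem_Ht.1 hXH with rfl | rfl | ⟨i, -, rfl⟩
    · simp
    · exact absurd hX hU
    · exact absurd hX (hE i)
  by_cases hA : smallEdge t n ∈ G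
  · have := card_lt_card (ssubset_smallEdge_of_max'_mem he hne (mem_filter.1 (hG hA)).2)
    have := card_le_card hGsub
    have := card_le_two (a := smallEdge t n) (b := e)
    exact .inr ⟨_, hA, by omega⟩
  · rcases subset_singleton_iff.1 ((subset_insert_iff_of_notMem hA).1 hGsub) with rfl | rfl
    · exact .inl rfl
    · exact .inr ⟨e, mem_singleton_self e, by rw [card_singleton]; omega⟩

theorem hasBergeStar_insert_Ht (ht : 3 ≤ t) (hn : t ≤ n) {e : Finset (Fin n)} (he : e ∉ Ht t n)
    (he2 : 2 ≤ #e) : HasBergeStar t n (insert e (Ht t n)) := by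
  have hne : e.Nonempty := card_pos.1 (by omega)
  have hc : ∀ X ∈ (insert e (Ht t n)).filter (e.max' hne ∈ ·), e.max' hne ∈ X :=
    fun X hX => (mem_filter.1 hX).2
  refine hasBergeStar_of_hall (filter_subset _ _)
    (card_filter_mem_insert_Ht (by omega) (by omega) he (e.max'_mem hne)) hc fun G hG => ?_
  rcases exists_card_lt_of_subset_filter_insert_Ht ht hn he he2 hne hG with rfl | ⟨X, hXG, hX⟩
  · simp
  calc #G ≤ #(X.erase (e.max' hne)) := by rw [card_erase_of_mem (hc X (hG hXG))]; omega
    _ ≤ _ := card_le_card (subset_biUnion_of_mem (·.erase (e.max' hne)) hXG)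

end Ht

/-- For `t ≥ 5` and `n ≥ t`, the hypergraph `H_t(n)` is Berge-`S_t` saturated and has `t - 1`
hyperedges; in particular `sat(n, B(S_t)) ≤ t - 1`. -/
theorem Ht_starSat (t n : ℕ) (ht : 5 ≤ t) (hn : t ≤ n) :
    StarSat t n (Ht t n) ∧ (Ht t n).card = t - 1 :=
  ⟨⟨fun _ => two_le_card_of_mem_Ht ht hn, not_hasBergeStar_Ht (by omega) (by omega),
    fun _ => hasBergeStar_insert_Ht (by omega) hn⟩, card_Ht (by omega) (by omega)⟩
end

section
/- For n ≥ 4, the hypergraph ([n], {[n], [n]\{1}}) is Berge-S_4 saturated; hence sat(n, B(S_4)) = 2. -/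
open Finset

/-!
A Berge-`S₄` uses three distinct hyperedges, so a hypergraph with at most two edges has none;
in particular no saturated hypergraph has fewer than two edges, since adding a missing pair to
it must create a star. For `{[n], [n] \ {z}}` and a new edge `e` with `|e| ≥ 2`, take the centre
`c ∈ e` different from `z` and a leaf `v₁ ∈ e`; as `n ≥ 4`, the edge `[n] \ {z}` gets a leaf
`v₃ ∉ {c, v₁, z}` and `[n]` a further leaf `v₂`.
-/

lemma HasBergeStar.card_le {t n : ℕ} {H : Finset (Finset (Fin n))} (h : HasBergeStar t n H) :
    t - 1 ≤ #H := by
  obtain ⟨E, _, _, hE, _, _, hmem⟩ := h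
  simpa using card_le_card_of_injOn E (s := univ) (fun k _ => (hmem k).1) hE.injOn

lemma hasBergeStar_four {n : ℕ} {H : Finset (Finset (Fin n))} {E₁ E₂ E₃ : Finset (Fin n)}
    {c v₁ v₂ v₃ : Fin n} (hE : [E₁, E₂, E₃].Nodup) (hv : [c, v₁, v₂, v₃].Nodup)
    (h₁ : E₁ ∈ H ∧ c ∈ E₁ ∧ v₁ ∈ E₁) (h₂ : E₂ ∈ H ∧ c ∈ E₂ ∧ v₂ ∈ E₂)
    (h₃ : E₃ ∈ H ∧ c ∈ E₃ ∧ v₃ ∈ E₃) :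
    HasBergeStar 4 n H := by
  simp only [List.nodup_cons, List.mem_cons, List.not_mem_nil, or_false, not_or,
    List.nodup_nil, not_false_eq_true, and_true] at hE hv
  refine ⟨![E₁, E₂, E₃], c, ![v₁, v₂, v₃], ?_, ?_, ?_, ?_⟩
  · intro i j hij
    fin_cases i <;> fin_cases j <;> simp_all [eq_comm]
  · intro i j hij
    fin_cases i <;> fin_cases j <;> simp_all [eq_comm]
  · intro k
    fin_cases k <;> simp_all [eq_comm]
  · intro k
    fin_cases k <;> simpa

lemma exists_ne_ne_ne {α : Type*} [Fintype α] [DecidableEq α] (h : 3 < Fintype.card α)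
    (a b c : α) : ∃ x : α, x ≠ a ∧ x ≠ b ∧ x ≠ c := by
  have hcard : #({a, b, c} : Finset α) < #(univ : Finset α) :=
    card_le_three.trans_lt (by rwa [card_univ])
  obtain ⟨x, -, hx⟩ := exists_mem_notMem_of_card_lt_card hcard
  exact ⟨x, by simpa using hx⟩

lemma hasBergeStar_four_insert_univ_univ_erase {n : ℕ} (hn : 4 ≤ n) (z : Fin n)
    {e : Finset (Fin n)} (he : 2 ≤ #e) (he_univ : e ≠ univ) (he_erase : e ≠ univ.erase z) :
    HasBergeStar 4 n {e, univ, univ.erase z} := by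
  obtain ⟨c, hc, hcz⟩ := exists_mem_ne he z
  obtain ⟨v₁, hv₁, hv₁c⟩ := exists_mem_ne he c
  have hcard : 3 < Fintype.card (Fin n) := by rw [Fintype.card_fin]; omega
  obtain ⟨v₃, hv₃c, hv₃v₁, hv₃z⟩ := exists_ne_ne_ne hcard c v₁ z
  obtain ⟨v₂, hv₂c, hv₂v₁, hv₂v₃⟩ := exists_ne_ne_ne hcard c v₁ v₃
  have huniv : (univ : Finset (Fin n)) ≠ univ.erase z := (erase_ssubset (mem_univ z)).ne'
  refine hasBergeStar_four (E₁ := e) (E₂ := univ) (E₃ := univ.erase z)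
    (c := c) (v₁ := v₁) (v₂ := v₂) (v₃ := v₃) ?_ ?_ ?_ ?_ ?_
  · simp [he_univ, he_erase, huniv]
  · simp [hv₁c.symm, hv₂c.symm, hv₃c.symm, hv₂v₁.symm, hv₃v₁.symm, hv₂v₃]
  · simp [hc, hv₁]
  · simp
  · simp [hcz, hv₃z]

lemma starSat_univ_univ_erase {n : ℕ} (hn : 4 ≤ n) (z : Fin n) :
    StarSat 4 n {univ, univ.erase z} := by
  refine ⟨?_, fun h => ?_, ?_⟩
  · simp only [mem_insert, mem_singleton, forall_eq_or_imp, forall_eq, card_univ,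
      Fintype.card_fin, card_erase_of_mem (mem_univ z)]
    omega
  · have := h.card_le
    have := card_le_two (a := (univ : Finset (Fin n))) (b := univ.erase z)
    omega
  · intro e he hcard
    simp only [mem_insert, mem_singleton, not_or] at he
    exact hasBergeStar_four_insert_univ_univ_erase hn z hcard he.1 he.2

lemma StarSat.two_le_card {t n : ℕ} (ht : 4 ≤ t) (hn : 3 ≤ n) {H : Finset (Finset (Fin n))}
    (h : StarSat t n H) : 2 ≤ #H := by
  by_contra! hH
  have hpairs : #H < #(powersetCard 2 (univ : Finset (Fin n))) := by
    have : 3 ≤ n.choose 2 := Nat.choose_le_choose 2 hn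
    rw [card_powersetCard, card_univ, Fintype.card_fin]
    omega
  obtain ⟨f, hf, hfH⟩ := exists_mem_notMem_of_card_lt_card hpairs
  have := (h.2.2 f hfH (mem_powersetCard.mp hf).2.ge).card_le
  have := card_insert_le f H
  omega

/-- For `n ≥ 4`, the hypergraph `([n], {[n], [n] \ {1}})` is Berge-`S_4` saturated; hence
`sat(n, B(S_4)) = 2`. -/
theorem sat_S4 (n : ℕ) (hn : 4 ≤ n) :
    StarSat 4 n ({Finset.univ, Finset.univ.erase ⟨0, by omega⟩} : Finset (Finset (Fin n))) ∧
    IsLeast {m : ℕ | ∃ H : Finset (Finset (Fin n)), StarSat 4 n H ∧ H.card = m} 2 := by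
  have hsat := starSat_univ_univ_erase hn ⟨0, by omega⟩
  have hcard : #({univ, univ.erase ⟨0, by omega⟩} : Finset (Finset (Fin n))) = 2 :=
    card_pair (erase_ssubset (mem_univ _)).ne'
  refine ⟨hsat, ⟨_, hsat, hcard⟩, ?_⟩
  rintro m ⟨H, hH, rfl⟩
  exact hH.two_le_card le_rfl (by omega)
end

section
/- For n ≥ 3, the hypergraph ([n], {[n], [n]\{1}}) is Berge-K_3 saturated; hence sat(n, B(K_3)) = 2. -/
open Finset

/-- A hypergraph `H` on `[n]` contains a Berge-`K_3` subhypergraph: three distinct hyperedges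
`E₁, E₂, E₃` and three distinct vertices `a, b, c` with `{a,b} ⊆ E₁`, `{b,c} ⊆ E₂`,
`{a,c} ⊆ E₃`. -/
def HasBergeTriangle (n : ℕ) (H : Finset (Finset (Fin n))) : Prop :=
  ∃ E₁ E₂ E₃ : Finset (Fin n), ∃ a b c : Fin n,
    E₁ ∈ H ∧ E₂ ∈ H ∧ E₃ ∈ H ∧ E₁ ≠ E₂ ∧ E₂ ≠ E₃ ∧ E₁ ≠ E₃ ∧
    a ≠ b ∧ b ≠ c ∧ a ≠ c ∧
    a ∈ E₁ ∧ b ∈ E₁ ∧ b ∈ E₂ ∧ c ∈ E₂ ∧ a ∈ E₃ ∧ c ∈ E₃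

/-- `H` is Berge-`K_3` saturated. -/
def TriangleSat (n : ℕ) (H : Finset (Finset (Fin n))) : Prop :=
  (∀ e ∈ H, 2 ≤ e.card) ∧ ¬ HasBergeTriangle n H ∧
    ∀ e : Finset (Fin n), e ∉ H → 2 ≤ e.card → HasBergeTriangle n (insert e H)

/-!
A Berge triangle uses three distinct hyperedges, so a hypergraph with at most two edges contains
none. Hence a saturated hypergraph on `n ≥ 3` vertices has two edges: otherwise one of the pairs
`{0, 1}`, `{0, 2}` could be added. Conversely, a new edge `e` forms a triangle with `[n]` and
`[n] \ {v}`: pick `b, c ∈ e` with `c ≠ v`, where `b = v` if `v ∈ e`, and a third vertex `a ≠ v`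
outside `e` (possible when `v ∉ e`, as then `e ⊊ [n] \ {v}`) or just outside `{v, c}` (when `v ∈ e`).
-/

variable {n : ℕ}

lemma HasBergeTriangle.three_le_card {H : Finset (Finset (Fin n))} (h : HasBergeTriangle n H) :
    3 ≤ H.card := by
  obtain ⟨E₁, E₂, E₃, -, -, -, h₁, h₂, h₃, h₁₂, h₂₃, h₁₃, -⟩ := h
  calc 3 = ({E₁, E₂, E₃} : Finset (Finset (Fin n))).card := by
        rw [card_insert_of_notMem (by simp [h₁₂, h₁₃]), card_pair h₂₃]
    _ ≤ H.card := card_le_card (by simp [insert_subset_iff, h₁, h₂, h₃])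

lemma TriangleSat.two_le_card_of_notMem {H : Finset (Finset (Fin n))} (hH : TriangleSat n H)
    {e : Finset (Fin n)} (he : e ∉ H) (he₂ : 2 ≤ e.card) : 2 ≤ H.card := by
  have := (hH.2.2 e he he₂).three_le_card
  rw [card_insert_of_notMem he] at this
  omega

lemma TriangleSat.two_le_card {H : Finset (Finset (Fin n))} (hH : TriangleSat n H)
    (hn : 3 ≤ n) : 2 ≤ H.card := by
  let v₀ : Fin n := ⟨0, by omega⟩
  let v₁ : Fin n := ⟨1, by omega⟩
  let v₂ : Fin n := ⟨2, by omega⟩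
  have h₀₁ : v₀ ≠ v₁ := by simp [v₀, v₁, Fin.ext_iff]
  have h₀₂ : v₀ ≠ v₂ := by simp [v₀, v₂, Fin.ext_iff]
  have h₁₂ : v₁ ≠ v₂ := by simp [v₁, v₂, Fin.ext_iff]
  by_cases h : {v₀, v₁} ∈ H ∧ {v₀, v₂} ∈ H
  · have hne : ({v₀, v₁} : Finset (Fin n)) ≠ {v₀, v₂} := fun heq => by
      have : v₁ ∈ ({v₀, v₂} : Finset (Fin n)) := heq ▸ by simp
      simp [h₀₁.symm, h₁₂] at this
    exact (card_pair hne).symm.le.trans (card_le_card (by simp [insert_subset_iff, h.1, h.2]))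
  · rcases not_and_or.mp h with h | h
    · exact hH.two_le_card_of_notMem h (card_pair h₀₁).ge
    · exact hH.two_le_card_of_notMem h (card_pair h₀₂).ge

section UnivErase

variable {v : Fin n} {e : Finset (Fin n)}

lemma univ_ne_univ_erase (v : Fin n) : (univ : Finset (Fin n)) ≠ univ.erase v :=
  fun h => notMem_erase v univ (h ▸ mem_univ v)

lemma hasBergeTriangle_insert_univ_erase (heu : e ≠ univ) (hev : e ≠ univ.erase v)
    {a b c : Fin n} (hab : a ≠ b) (hbc : b ≠ c) (hac : a ≠ c) (hb : b ∈ e) (hc : c ∈ e)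
    (hav : a ≠ v) (hcv : c ≠ v) :
    HasBergeTriangle n (insert e {univ, univ.erase v}) :=
  ⟨univ, e, univ.erase v, a, b, c, by simp, by simp, by simp, heu.symm, hev,
    univ_ne_univ_erase v, hab, hbc, hac, mem_univ a, mem_univ b, hb, hc,
    mem_erase.mpr ⟨hav, mem_univ a⟩, mem_erase.mpr ⟨hcv, mem_univ c⟩⟩

lemma hasBergeTriangle_insert_univ_erase_of_mem (hn : 3 ≤ n) (heu : e ≠ univ)
    (hev : e ≠ univ.erase v) (he₂ : 2 ≤ e.card) (hv : v ∈ e) :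
    HasBergeTriangle n (insert e {univ, univ.erase v}) := by
  obtain ⟨c, hc, hcv⟩ := exists_mem_ne he₂ v
  obtain ⟨a, -, ha⟩ := exists_mem_notMem_of_card_lt_card (s := {v, c}) (t := univ)
    (by rw [card_univ, Fintype.card_fin]; exact card_le_two.trans_lt hn)
  simp only [mem_insert, mem_singleton, not_or] at ha
  exact hasBergeTriangle_insert_univ_erase heu hev ha.1 hcv.symm ha.2 hv hc ha.1 hcv

lemma hasBergeTriangle_insert_univ_erase_of_notMem (heu : e ≠ univ) (hev : e ≠ univ.erase v)
    (he₂ : 2 ≤ e.card) (hv : v ∉ e) :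
    HasBergeTriangle n (insert e {univ, univ.erase v}) := by
  obtain ⟨b, hb, c, hc, hbc⟩ := one_lt_card.mp he₂
  obtain ⟨a, ha, hae⟩ :=
    exists_of_ssubset ((subset_erase.mpr ⟨subset_univ e, hv⟩).ssubset_of_ne hev)
  exact hasBergeTriangle_insert_univ_erase heu hev (ne_of_mem_of_not_mem hb hae).symm hbc
    (ne_of_mem_of_not_mem hc hae).symm hb hc (mem_erase.mp ha).1 (ne_of_mem_of_not_mem hc hv)

lemma triangleSat_univ_erase (hn : 3 ≤ n) (v : Fin n) :
    TriangleSat n {univ, univ.erase v} := by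
  refine ⟨?_, fun h => ?_, fun e he he₂ => ?_⟩
  · intro e he
    rcases mem_insert.mp he with rfl | he
    · rw [card_univ, Fintype.card_fin]; omega
    · rw [mem_singleton.mp he, card_erase_of_mem (mem_univ v), card_univ, Fintype.card_fin]
      omega
  · have := h.three_le_card
    rw [card_pair (univ_ne_univ_erase v)] at this
    omega
  · simp only [mem_insert, mem_singleton, not_or] at he
    obtain ⟨heu, hev⟩ := he
    by_cases hv : v ∈ e
    · exact hasBergeTriangle_insert_univ_erase_of_mem hn heu hev he₂ hv
    · exact hasBergeTriangle_insert_univ_erase_of_notMem heu hev he₂ hv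

end UnivErase

/-- For `n ≥ 3`, the hypergraph `([n], {[n], [n] \ {1}})` is Berge-`K_3` saturated; hence
`sat(n, B(K_3)) = 2`. -/
theorem sat_K3 (n : ℕ) (hn : 3 ≤ n) :
    TriangleSat n ({Finset.univ, Finset.univ.erase ⟨0, by omega⟩} : Finset (Finset (Fin n))) ∧
    IsLeast {m : ℕ | ∃ H : Finset (Finset (Fin n)), TriangleSat n H ∧ H.card = m} 2 := by
  have hsat := triangleSat_univ_erase hn ⟨0, by omega⟩
  refine ⟨hsat, ⟨_, hsat, card_pair (univ_ne_univ_erase _)⟩, ?_⟩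
  rintro m ⟨H, hH, rfl⟩
  exact hH.two_le_card hn
end

section
/- If a graph G on n ≥ 3 vertices has two distinct vertex covers each of size 2, then G is a subgraph of a 4-cycle, or a subgraph of a triangle together with additional edges all incident to one fixed vertex of the triangle; in either case |E(G)| ≤ n. -/
/-!
Two distinct 2-element sets either share exactly one vertex, `{a, b}` and `{a, c}`, or are
disjoint, `{a, c}` and `{b, d}`. An edge meeting both covers then either contains `a` or is
`bc`, which bounds the number of edges by `deg a + 1 ≤ n`; or it joins `{a, c}` to `{b, d}`,
so it is a side of the 4-cycle `abcd` and there are at most `4 ≤ n` edges.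
-/

open Finset

namespace Sym2

variable {α : Type*} {a b c d : α} {e : Sym2 α}

theorem mem_or_eq_of_mem_or_mem (hbc : b ≠ c) (hb : a ∈ e ∨ b ∈ e) (hc : a ∈ e ∨ c ∈ e) :
    a ∈ e ∨ e = s(b, c) := by
  rcases hb with ha | hb
  · exact .inl ha
  rcases hc with ha | hc
  · exact .inl ha
  · exact .inr ((mem_and_mem_iff hbc).mp ⟨hb, hc⟩)

theorem mem_square_of_mem_or_mem (hab : a ≠ b) (hbc : b ≠ c) (hcd : c ≠ d) (hda : d ≠ a)
    (hac : a ∈ e ∨ c ∈ e) (hbd : b ∈ e ∨ d ∈ e) :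
    e ∈ ({s(a, b), s(b, c), s(c, d), s(d, a)} : Set (Sym2 α)) := by
  rcases hac with ha | hc <;> rcases hbd with hb | hd
  · exact .inl ((mem_and_mem_iff hab).mp ⟨ha, hb⟩)
  · exact .inr <| .inr <| .inr ((mem_and_mem_iff hda).mp ⟨hd, ha⟩)
  · exact .inr <| .inl ((mem_and_mem_iff hbc).mp ⟨hb, hc⟩)
  · exact .inr <| .inr <| .inl ((mem_and_mem_iff hcd).mp ⟨hc, hd⟩)

end Sym2

theorem Finset.exists_pairs_of_ne_of_card_eq_two {α : Type*} [DecidableEq α] {s t : Finset α}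
    (hs : #s = 2) (ht : #t = 2) (hst : s ≠ t) :
    (∃ a b c : α, a ≠ b ∧ b ≠ c ∧ a ≠ c ∧ s = {a, b} ∧ t = {a, c}) ∨
      ∃ a b c d : α, [a, b, c, d].Nodup ∧ s = {a, c} ∧ t = {b, d} := by
  obtain ⟨p, q, hpq, rfl⟩ := card_eq_two.mp hs
  obtain ⟨r, u, hru, rfl⟩ := card_eq_two.mp ht
  by_cases hpr : p = r
  · subst hpr
    exact .inl ⟨p, q, u, hpq, fun h => hst (by rw [h]), hru, rfl, rfl⟩
  by_cases hpu : p = u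
  · subst hpu
    exact .inl ⟨p, q, r, hpq, fun h => hst (by rw [h, pair_comm]), hru.symm, rfl, pair_comm _ _⟩
  by_cases hqr : q = r
  · subst hqr
    exact .inl ⟨q, p, u, hpq.symm, hpu, hru, pair_comm _ _, rfl⟩
  by_cases hqu : q = u
  · subst hqu
    exact .inl ⟨q, p, r, hpq.symm, hpr, hru.symm, pair_comm _ _, pair_comm _ _⟩
  exact .inr ⟨p, r, q, u, by simp [*, Ne.symm hqr], rfl, rfl⟩

namespace SimpleGraph

variable {V : Type*} [Fintype V] (G : SimpleGraph V) [DecidableRel G.Adj]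

theorem card_edgeFinset_le_card_of_forall_mem_or_eq [DecidableEq V] {a b c : V}
    (h : ∀ e ∈ G.edgeSet, a ∈ e ∨ e = s(b, c)) : #G.edgeFinset ≤ Fintype.card V := by
  have hsub : G.edgeFinset ⊆ insert s(b, c) (G.incidenceFinset a) := by
    intro e he
    rw [mem_edgeFinset] at he
    rcases h e he with ha | rfl
    · exact mem_insert_of_mem ((G.mem_incidenceFinset a e).mpr ⟨he, ha⟩)
    · exact mem_insert_self _ _
  calc #G.edgeFinset ≤ #(insert s(b, c) (G.incidenceFinset a)) := card_le_card hsub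
    _ ≤ G.degree a + 1 := by rw [← G.card_incidenceFinset_eq_degree]; exact card_insert_le _ _
    _ ≤ Fintype.card V := G.degree_lt_card_verts a

end SimpleGraph

theorem two_distinct_covers_general {V : Type*} [Fintype V] [DecidableEq V] (G : SimpleGraph V)
    [DecidableRel G.Adj] (n : ℕ) (hcard : Fintype.card V = n)
    (C₁ C₂ : Finset V) (hne : C₁ ≠ C₂) (h₁ : C₁.card = 2) (h₂ : C₂.card = 2)
    (hcov₁ : ∀ e ∈ G.edgeSet, ∃ v ∈ C₁, v ∈ e) (hcov₂ : ∀ e ∈ G.edgeSet, ∃ v ∈ C₂, v ∈ e) :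
    ((∃ a b c d : V, List.Pairwise (· ≠ ·) [a, b, c, d] ∧
        ∀ e ∈ G.edgeSet, e ∈ ({s(a, b), s(b, c), s(c, d), s(d, a)} : Set (Sym2 V))) ∨
      (∃ a b c : V, a ≠ b ∧ b ≠ c ∧ a ≠ c ∧
        ∀ e ∈ G.edgeSet, e ∈ ({s(a, b), s(b, c), s(a, c)} : Set (Sym2 V)) ∨ a ∈ e)) ∧
    G.edgeFinset.card ≤ n := by
  subst hcard
  rcases exists_pairs_of_ne_of_card_eq_two h₁ h₂ hne with
    ⟨a, b, c, hab, hbc, hac, rfl, rfl⟩ | ⟨a, b, c, d, hdist, rfl, rfl⟩ <;>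
  simp only [mem_insert, mem_singleton, exists_eq_or_imp, exists_eq_left] at hcov₁ hcov₂
  · have hstar : ∀ e ∈ G.edgeSet, a ∈ e ∨ e = s(b, c) := fun e he =>
      Sym2.mem_or_eq_of_mem_or_mem hbc (hcov₁ e he) (hcov₂ e he)
    refine ⟨.inr ⟨a, b, c, hab, hbc, hac, fun e he => ?_⟩,
      G.card_edgeFinset_le_card_of_forall_mem_or_eq hstar⟩
    rcases hstar e he with ha | rfl
    · exact .inr ha
    · exact .inl (by simp)
  · obtain ⟨⟨hab, -, had⟩, ⟨hbc, -⟩, hcd⟩ :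
        (a ≠ b ∧ a ≠ c ∧ a ≠ d) ∧ (b ≠ c ∧ b ≠ d) ∧ c ≠ d := by simpa using hdist
    have hsquare : ∀ e ∈ G.edgeSet, e ∈ ({s(a, b), s(b, c), s(c, d), s(d, a)} : Set (Sym2 V)) :=
      fun e he => Sym2.mem_square_of_mem_or_mem hab hbc hcd had.symm (hcov₁ e he) (hcov₂ e he)
    have hsub : G.edgeFinset ⊆ {s(a, b), s(b, c), s(c, d), s(d, a)} := fun e he => by
      simpa using hsquare e (SimpleGraph.mem_edgeFinset.mp he)
    refine ⟨.inl ⟨a, b, c, d, hdist, hsquare⟩, ?_⟩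
    calc #G.edgeFinset ≤ 4 := (card_le_card hsub).trans card_le_four
      _ = [a, b, c, d].length := rfl
      _ ≤ Fintype.card V := hdist.length_le_card

/-- If a graph `G` on `n ≥ 3` vertices has two distinct vertex covers each of size 2, then `G`
is a subgraph of a 4-cycle, or a subgraph of a triangle together with additional edges all
incident to one fixed vertex of the triangle; in either case `|E(G)| ≤ n`. -/
theorem two_distinct_covers {V : Type*} [Fintype V] [DecidableEq V] (G : SimpleGraph V)
    [DecidableRel G.Adj] (n : ℕ) (hcard : Fintype.card V = n) (hn : 3 ≤ n)
    (C₁ C₂ : Finset V) (hne : C₁ ≠ C₂) (h₁ : C₁.card = 2) (h₂ : C₂.card = 2)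
    (hcov₁ : ∀ e ∈ G.edgeSet, ∃ v ∈ C₁, v ∈ e) (hcov₂ : ∀ e ∈ G.edgeSet, ∃ v ∈ C₂, v ∈ e) :
    ((∃ a b c d : V, List.Pairwise (· ≠ ·) [a, b, c, d] ∧
        ∀ e ∈ G.edgeSet, e ∈ ({s(a, b), s(b, c), s(c, d), s(d, a)} : Set (Sym2 V))) ∨
      (∃ a b c : V, a ≠ b ∧ b ≠ c ∧ a ≠ c ∧
        ∀ e ∈ G.edgeSet, e ∈ ({s(a, b), s(b, c), s(a, c)} : Set (Sym2 V)) ∨ a ∈ e)) ∧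
    G.edgeFinset.card ≤ n :=
  two_distinct_covers_general G n hcard C₁ C₂ hne h₁ h₂ hcov₁ hcov₂
end
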